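/- Let z: S¹ → ℝ satisfy z = ½|g'|² + f(d) a.e. where f is strictly increasing on (0,∞) with f(t) → −∞ as t → 0+, d > 0 a.e., and suppose z is continuous (equal a.e. to c + ½|g|² for a constant c and continuous g). If ess inf d > 0 fails on an interval ω, then ess sup_{ω} |g'| = ∞; conversely, if ess inf_{ω} d > 0 then ess sup_{ω} |g'| < ∞. -/

import Mathlib

/-!
If `d ≥ D > 0` on `ω`, monotonicity gives `f(d) ≥ f(D)`, so the relation bounds `½|g'|²` by
`c + ½ max_ω |g|² − f(D)`, which is finite because `g` is continuous on the compact `ω̄`.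
Conversely, if `|g'| ≤ K`, then `f(d) = c − ½|g'|² + ½|g|² ≥ c − K²`, while `f → −∞` at `0+`
forces `f < c − K²` on some interval `(0, u)`; hence `d ≥ u` a.e.
-/

open Filter MeasureTheory

/-- Euclidean dot product on ℝ². -/
def dot (a b : ℝ × ℝ) : ℝ := a.1 * b.1 + a.2 * b.2

/-- Counterclockwise rotation by π/2 in ℝ². -/
def Jv (a : ℝ × ℝ) : ℝ × ℝ := (-a.2, a.1)

lemma dot_self_nonneg (v : ℝ × ℝ) : 0 ≤ dot v v :=
  add_nonneg (mul_self_nonneg _) (mul_self_nonneg _)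

/-- `‖·‖` on `ℝ × ℝ` is the sup norm, not the Euclidean one. -/
lemma sq_norm_le_dot_self (v : ℝ × ℝ) : ‖v‖ ^ 2 ≤ dot v v := by
  rw [Prod.norm_def, Real.norm_eq_abs, Real.norm_eq_abs, dot]
  rcases max_cases |v.1| |v.2| with ⟨h, -⟩ | ⟨h, -⟩ <;> rw [h, sq_abs] <;> nlinarith

lemma dot_self_le_two_mul_sq_norm (v : ℝ × ℝ) : dot v v ≤ 2 * ‖v‖ ^ 2 := by
  have h₁ : |v.1| ≤ ‖v‖ := norm_fst_le v
  have h₂ : |v.2| ≤ ‖v‖ := norm_snd_le v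
  have := sq_le_sq' (neg_le_of_abs_le h₁) (le_of_abs_le h₁)
  have := sq_le_sq' (neg_le_of_abs_le h₂) (le_of_abs_le h₂)
  unfold dot; nlinarith

lemma norm_le_sqrt_of_dot_self_le {v : ℝ × ℝ} {V : ℝ} (h : dot v v ≤ V) : ‖v‖ ≤ √V :=
  (le_abs_self _).trans (Real.abs_le_sqrt ((sq_norm_le_dot_self v).trans h))

lemma exists_ae_restrict_Ioo_le_of_continuous {h : ℝ → ℝ} (hh : Continuous h) (a b : ℝ) :
    ∃ M, ∀ᵐ θ ∂(volume.restrict (Set.Ioo a b)), h θ ≤ M := by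
  obtain ⟨M, hM⟩ := (isCompact_Icc (a := a) (b := b)).bddAbove_image hh.continuousOn
  exact ⟨M, ae_restrict_of_forall_mem measurableSet_Ioo fun θ hθ ↦
    hM ⟨θ, Set.Ioo_subset_Icc_self hθ, rfl⟩⟩

section DuBoisReymond

variable {α : Type*} [MeasurableSpace α] {μ : Measure α} {f : ℝ → ℝ} {d v w : α → ℝ} {c : ℝ}

lemma ae_le_of_ae_le_of_monotoneOn (hfmono : MonotoneOn f (Set.Ioi 0))
    (heq : ∀ᵐ x ∂μ, f (d x) + (1/2) * v x - (1/2) * w x = c)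
    {M : ℝ} (hw : ∀ᵐ x ∂μ, w x ≤ M) {D : ℝ} (hD : 0 < D) (hd : ∀ᵐ x ∂μ, D ≤ d x) :
    ∀ᵐ x ∂μ, v x ≤ 2 * (c + (1/2) * M - f D) := by
  filter_upwards [heq, hw, hd] with x hx hwx hdx
  have : f D ≤ f (d x) := hfmono hD (hD.trans_le hdx) hdx
  linarith

lemma exists_pos_ae_le_of_tendsto_atBot (hfbot : Tendsto f (nhdsWithin 0 (Set.Ioi 0)) atBot)
    (heq : ∀ᵐ x ∂μ, f (d x) + (1/2) * v x - (1/2) * w x = c)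
    (hdpos : ∀ᵐ x ∂μ, 0 < d x) {V : ℝ} (hv : ∀ᵐ x ∂μ, v x ≤ V) (hw : ∀ᵐ x ∂μ, 0 ≤ w x) :
    ∃ D > (0:ℝ), ∀ᵐ x ∂μ, D ≤ d x := by
  obtain ⟨u, hu, hfu⟩ := mem_nhdsGT_iff_exists_Ioo_subset.1 <|
    hfbot.eventually (eventually_lt_atBot (c - (1/2) * V))
  refine ⟨u, hu, ?_⟩
  filter_upwards [heq, hdpos, hv, hw] with x hx hdx hvx hwx
  by_contra! hlt
  have : f (d x) < c - (1/2) * V := hfu ⟨hdx, hlt⟩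
  linarith

end DuBoisReymond

theorem stmt_7_general (a b c : ℝ)
    (f : ℝ → ℝ) (hfmono : StrictMonoOn f (Set.Ioi 0))
    (hfbot : Tendsto f (nhdsWithin 0 (Set.Ioi 0)) atBot)
    (g g' : ℝ → ℝ × ℝ) (hg : Continuous g)
    (hdpos : ∀ᵐ θ ∂(volume.restrict (Set.Ioo a b)), 0 < dot (Jv (g θ)) (g' θ))
    (heq : ∀ᵐ θ ∂(volume.restrict (Set.Ioo a b)),
      f (dot (Jv (g θ)) (g' θ)) + (1/2) * dot (g' θ) (g' θ)
        - (1/2) * dot (g θ) (g θ) = c) :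
    (∃ D > (0:ℝ), ∀ᵐ θ ∂(volume.restrict (Set.Ioo a b)), D ≤ dot (Jv (g θ)) (g' θ)) ↔
    (∃ K : ℝ, ∀ᵐ θ ∂(volume.restrict (Set.Ioo a b)), ‖g' θ‖ ≤ K) := by
  constructor
  · rintro ⟨D, hD, hd⟩
    obtain ⟨M, hM⟩ := exists_ae_restrict_Ioo_le_of_continuous
      (by unfold dot; fun_prop : Continuous fun θ ↦ dot (g θ) (g θ)) a b
    exact ⟨_, (ae_le_of_ae_le_of_monotoneOn hfmono.monotoneOn heq hM hD hd).mono
      fun θ ↦ norm_le_sqrt_of_dot_self_le⟩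
  · rintro ⟨K, hK⟩
    refine exists_pos_ae_le_of_tendsto_atBot hfbot heq hdpos (V := 2 * K ^ 2) ?_
      (ae_of_all _ fun θ ↦ dot_self_nonneg (g θ))
    filter_upwards [hK] with θ hθ
    calc dot (g' θ) (g' θ) ≤ 2 * ‖g' θ‖ ^ 2 := dot_self_le_two_mul_sq_norm _
      _ ≤ 2 * K ^ 2 := by gcongr

/-- Under the DuBois-Reymond relation `f(d) + ½|g'|² − ½|g|² = c` a.e. on an
interval `ω`, with `f` strictly increasing and `f → −∞` at `0+` and `d > 0` a.e.,
the essential infimum of `d` on `ω` is positive iff `|g'|` is essentially bounded on `ω`. -/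
theorem stmt_7 (a b c : ℝ) (hab : a < b)
    (f : ℝ → ℝ) (hfmono : StrictMonoOn f (Set.Ioi 0))
    (hfbot : Tendsto f (nhdsWithin 0 (Set.Ioi 0)) atBot)
    (g g' : ℝ → ℝ × ℝ) (hg : Continuous g)
    (hdpos : ∀ᵐ θ ∂(volume.restrict (Set.Ioo a b)), 0 < dot (Jv (g θ)) (g' θ))
    (heq : ∀ᵐ θ ∂(volume.restrict (Set.Ioo a b)),
      f (dot (Jv (g θ)) (g' θ)) + (1/2) * dot (g' θ) (g' θ)
        - (1/2) * dot (g θ) (g θ) = c) :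
    (∃ D > (0:ℝ), ∀ᵐ θ ∂(volume.restrict (Set.Ioo a b)), D ≤ dot (Jv (g θ)) (g' θ)) ↔
    (∃ K : ℝ, ∀ᵐ θ ∂(volume.restrict (Set.Ioo a b)), ‖g' θ‖ ≤ K) :=
  stmt_7_general a b c f hfmono hfbot g g' hg hdpos heq
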